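/- arXiv:2010.02493 — 5 statements merged into one kernel-verified Lean document; each statement's English description precedes it below -/
import Mathlib

section
/- Let X and Y be finite-dimensional real Hilbert spaces, K ⊆ Y a closed convex cone, and g : X → Y a continuous map such that the set {(x,y) ∈ X × Y : g(x) + y ∈ K} is convex. Then the function θ : X → ℝ defined by θ(x) = (1/2)·(dist(g(x), K))², where dist(v,K) = inf{‖v − w‖ : w ∈ K}, is a convex function on X. -/
/-!
`dist(v, K) = inf {‖z‖ : v + z ∈ K}`, so near-optimal corrections `z₁, z₂` for `g x₁, g x₂`
combine, by convexity of `{(x, z) : g x + z ∈ K}`, into a correction `a z₁ + b z₂` for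
`g (a x₁ + b x₂)`: the distance `x ↦ dist(g x, K)` is convex, and so is half its square,
being nonnegative.
-/

open Metric Set

section InfDist

variable {F : Type*} [SeminormedAddCommGroup F] {K : Set F}

theorem Metric.infDist_le_norm_of_add_mem {x z : F} (h : x + z ∈ K) : infDist x K ≤ ‖z‖ := by
  simpa using infDist_le_dist_of_mem (x := x) h

theorem Metric.exists_add_mem_norm_lt_infDist_add (hK : K.Nonempty) (x : F) {ε : ℝ}
    (hε : 0 < ε) : ∃ z, x + z ∈ K ∧ ‖z‖ < infDist x K + ε := by
  obtain ⟨y, hyK, hy⟩ := (infDist_lt_iff hK).1 (lt_add_of_pos_right (infDist x K) hε)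
  exact ⟨y - x, by simpa using hyK, by rwa [← dist_eq_norm, dist_comm]⟩

end InfDist

theorem convexOn_infDist_of_convex_setOf_add_mem {E F : Type*} [AddCommGroup E] [Module ℝ E]
    [SeminormedAddCommGroup F] [NormedSpace ℝ F] {K : Set F} {g : E → F}
    (hgraph : Convex ℝ {p : E × F | g p.1 + p.2 ∈ K}) :
    ConvexOn ℝ univ fun x => infDist (g x) K := by
  rcases K.eq_empty_or_nonempty with rfl | hK
  · simpa using convexOn_const (0 : ℝ) (convex_univ : Convex ℝ (univ : Set E))
  refine ⟨convex_univ, fun x₁ _ x₂ _ a b ha hb hab => le_of_forall_pos_le_add fun ε hε => ?_⟩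
  obtain ⟨z₁, hz₁K, hz₁⟩ := exists_add_mem_norm_lt_infDist_add hK (g x₁) hε
  obtain ⟨z₂, hz₂K, hz₂⟩ := exists_add_mem_norm_lt_infDist_add hK (g x₂) hε
  have hmem : g (a • x₁ + b • x₂) + (a • z₁ + b • z₂) ∈ K :=
    hgraph (x := (x₁, z₁)) (y := (x₂, z₂)) hz₁K hz₂K ha hb hab
  calc infDist (g (a • x₁ + b • x₂)) K
      ≤ ‖a • z₁ + b • z₂‖ := infDist_le_norm_of_add_mem hmem
    _ ≤ a * ‖z₁‖ + b * ‖z₂‖ := by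
        simpa [norm_smul, abs_of_nonneg ha, abs_of_nonneg hb] using norm_add_le (a • z₁) (b • z₂)
    _ ≤ a * (infDist (g x₁) K + ε) + b * (infDist (g x₂) K + ε) := by gcongr
    _ = a • infDist (g x₁) K + b • infDist (g x₂) K + ε := by
        rw [smul_eq_mul, smul_eq_mul]; linear_combination ε * hab

theorem infeasibilityMeasure_convex_general
    {X Y : Type*}
    [NormedAddCommGroup X] [InnerProductSpace ℝ X]
    [NormedAddCommGroup Y] [InnerProductSpace ℝ Y]
    (K : Set Y)
    (g : X → Y)
    (hgraph : Convex ℝ {p : X × Y | g p.1 + p.2 ∈ K}) :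
    ConvexOn ℝ Set.univ (fun x : X => (1 / 2 : ℝ) * Metric.infDist (g x) K ^ 2) := by
  have hsq := (convexOn_infDist_of_convex_setOf_add_mem hgraph).pow
    (fun _ _ => infDist_nonneg) 2
  exact hsq.smul (by norm_num : (0 : ℝ) ≤ 1 / 2)

/-- If `K ⊆ Y` is a closed convex cone, `g : X → Y` is continuous and the set
`{(x,y) : g(x) + y ∈ K}` is convex, then `θ(x) = (1/2)·dist(g(x),K)²` is convex. -/
theorem infeasibilityMeasure_convex
    {X Y : Type*}
    [NormedAddCommGroup X] [InnerProductSpace ℝ X] [FiniteDimensional ℝ X]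
    [NormedAddCommGroup Y] [InnerProductSpace ℝ Y] [FiniteDimensional ℝ Y]
    (K : Set Y) (hKclosed : IsClosed K) (hKconvex : Convex ℝ K)
    (hKcone : ∀ (c : ℝ), 0 ≤ c → ∀ y ∈ K, c • y ∈ K)
    (g : X → Y) (hg : Continuous g)
    (hgraph : Convex ℝ {p : X × Y | g p.1 + p.2 ∈ K}) :
    ConvexOn ℝ Set.univ (fun x : X => (1 / 2 : ℝ) * Metric.infDist (g x) K ^ 2) :=
  infeasibilityMeasure_convex_general K g hgraph
end

section
/- Let ε > 0, ψ_ε(a,b) = a + b − √(a² + b² + 2ε²), and Θ(ε) = {(y,z) ∈ ℝᵖ × ℝᵖ : ψ_ε(yᵢ,zᵢ) = 0 for all i}. For every (y,z) ∈ Θ(ε), the tangent cone of Θ(ε) at (y,z) is T_{Θ(ε)}(y,z) = {(u,v) ∈ ℝᵖ × ℝᵖ : for each i, (1 − yᵢ/√(yᵢ² + zᵢ² + 2ε²))·uᵢ + (1 − zᵢ/√(yᵢ² + zᵢ² + 2ε²))·vᵢ = 0}, i.e., the kernel of the Jacobian of the map (y,z) ↦ (ψ_ε(yᵢ,zᵢ))_{i=1}^p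 at (y,z). -/
/-!
On `Θ(ε)` each constraint says exactly `yᵢ > 0` and `zᵢ = ε² / yᵢ`, so `Θ(ε)` is the graph of the
smooth map `y ↦ (ε² / yᵢ)ᵢ` over the open positive orthant. The tangent cone of the graph of a
map differentiable at `y` is the graph of its derivative, and since the square root equals
`yᵢ + zᵢ` on `Θ(ε)`, the kernel of the Jacobian is that same graph `vᵢ = -(ε² / yᵢ²) uᵢ`.
-/

open Filter Topology

/-- The (Bouligand) tangent cone of `C` at `x`: the set of directions `d` for which there
exist `tₖ ↓ 0` and `dₖ → d` with `x + tₖ • dₖ ∈ C` for all `k`. -/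
def tangentConeAt' {E : Type*} [NormedAddCommGroup E] [NormedSpace ℝ E]
    (C : Set E) (x : E) : Set E :=
  {d | ∃ (t : ℕ → ℝ) (dk : ℕ → E), (∀ k, 0 < t k) ∧ Tendsto t atTop (𝓝 0) ∧
      Tendsto dk atTop (𝓝 d) ∧ ∀ k, x + t k • dk k ∈ C}

section TangentCone

variable {E F : Type*} [NormedAddCommGroup E] [NormedSpace ℝ E]
  [NormedAddCommGroup F] [NormedSpace ℝ F]

theorem mem_tangentConeAt'_of_eventually {C : Set E} {x d : E} {t : ℕ → ℝ} {dk : ℕ → E}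
    (ht_pos : ∀ k, 0 < t k) (ht : Tendsto t atTop (𝓝 0)) (hdk : Tendsto dk atTop (𝓝 d))
    (hC : ∀ᶠ k in atTop, x + t k • dk k ∈ C) : d ∈ tangentConeAt' C x := by
  obtain ⟨N, hN⟩ := eventually_atTop.1 hC
  exact ⟨fun k => t (k + N), fun k => dk (k + N), fun k => ht_pos _,
    ht.comp (tendsto_add_atTop_nat N), hdk.comp (tendsto_add_atTop_nat N),
    fun k => hN _ (Nat.le_add_left N k)⟩

theorem tangentConeAt'_graph {f : E → F} {f' : E →L[ℝ] F} {U : Set E} {x : E}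
    (hU : U ∈ 𝓝 x) (hf : HasFDerivAt f f' x) :
    tangentConeAt' {w : E × F | w.1 ∈ U ∧ w.2 = f w.1} (x, f x) = {d | d.2 = f' d.1} := by
  ext d
  constructor
  · rintro ⟨t, dk, ht_pos, ht, hdk, hmem⟩
    have hquot : Tendsto (fun k => (t k)⁻¹ • (f (x + t k • (dk k).1) - f x)) atTop
        (𝓝 (f' d.1)) := by
      refine (hf.hasFDerivWithinAt (s := Set.univ)).lim ?_ (.of_forall fun _ => trivial) ?_
      · simpa using ht.smul hdk.fst_nhds
      · refine hdk.fst_nhds.congr fun k => ?_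
        rw [inv_smul_smul₀ (ht_pos k).ne']
    have hsnd : ∀ k, (t k)⁻¹ • (f (x + t k • (dk k).1) - f x) = (dk k).2 := by
      intro k
      have h : f x + t k • (dk k).2 = f (x + t k • (dk k).1) := (hmem k).2
      rw [← h, add_sub_cancel_left, inv_smul_smul₀ (ht_pos k).ne']
    exact tendsto_nhds_unique hdk.snd_nhds (hquot.congr hsnd)
  · intro hd
    set c : ℕ → ℝ := fun k => (k : ℝ) + 1
    have hc : Tendsto c atTop atTop :=
      tendsto_atTop_add_const_right atTop 1 tendsto_natCast_atTop_atTop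
    have ht : Tendsto (fun k => (c k)⁻¹) atTop (𝓝 0) := tendsto_inv_atTop_zero.comp hc
    refine mem_tangentConeAt'_of_eventually (t := fun k => (c k)⁻¹)
      (dk := fun k => (d.1, c k • (f (x + (c k)⁻¹ • d.1) - f x)))
      (fun k => by positivity) ht ?_ ?_
    · exact tendsto_const_nhds.prodMk_nhds (hd ▸ (hf.lim_real d.1).comp hc)
    · have hpath : Tendsto (fun k => x + (c k)⁻¹ • d.1) atTop (𝓝 x) := by
        simpa using tendsto_const_nhds.add (ht.smul_const d.1)
      filter_upwards [hpath.eventually_mem hU] with k hk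
      refine ⟨hk, ?_⟩
      simp [smul_smul, inv_mul_cancel₀ (by positivity : c k ≠ 0)]

end TangentCone

theorem add_sub_sqrt_eq_zero_iff {ε a b : ℝ} (hε : ε ≠ 0) :
    a + b - Real.sqrt (a ^ 2 + b ^ 2 + 2 * ε ^ 2) = 0 ↔ 0 < a ∧ b = ε ^ 2 / a := by
  have hε2 : 0 < ε ^ 2 := by positivity
  constructor
  · intro h
    have hsqrt : Real.sqrt (a ^ 2 + b ^ 2 + 2 * ε ^ 2) = a + b := by linarith
    have hsum : 0 < a + b := hsqrt ▸ Real.sqrt_pos.2 (by positivity)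
    have hab : a * b = ε ^ 2 := by
      nlinarith [Real.sq_sqrt (by positivity : 0 ≤ a ^ 2 + b ^ 2 + 2 * ε ^ 2)]
    have ha : 0 < a := by nlinarith
    exact ⟨ha, by rw [eq_div_iff ha.ne', ← hab, mul_comm]⟩
  · rintro ⟨ha, rfl⟩
    have hsq : a ^ 2 + (ε ^ 2 / a) ^ 2 + 2 * ε ^ 2 = (a + ε ^ 2 / a) ^ 2 := by
      field_simp; ring
    rw [hsq, Real.sqrt_sq (by positivity), sub_self]

theorem smoothedFB_jacobian_eq_zero_iff {ε a u v : ℝ} (ha : 0 < a) :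
    (1 - a / Real.sqrt (a ^ 2 + (ε ^ 2 / a) ^ 2 + 2 * ε ^ 2)) * u +
        (1 - ε ^ 2 / a / Real.sqrt (a ^ 2 + (ε ^ 2 / a) ^ 2 + 2 * ε ^ 2)) * v = 0 ↔
      v = -(ε ^ 2 / a ^ 2) * u := by
  have hsq : a ^ 2 + (ε ^ 2 / a) ^ 2 + 2 * ε ^ 2 = (a + ε ^ 2 / a) ^ 2 := by
    field_simp; ring
  have hpos : 0 < a + ε ^ 2 / a := by positivity
  rw [hsq, Real.sqrt_sq hpos.le]
  field_simp
  constructor <;> intro h <;> linarith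

theorem hasFDerivAt_const_div_pi {ι : Type*} [Fintype ι] (c : ℝ) {y : ι → ℝ}
    (hy : ∀ i, y i ≠ 0) :
    HasFDerivAt (fun w i => c / w i)
      (ContinuousLinearMap.pi fun i => (-(c / y i ^ 2)) •
        ContinuousLinearMap.proj (R := ℝ) (φ := fun _ : ι => ℝ) i) y := by
  refine hasFDerivAt_pi.2 fun i => ?_
  have h := (hasDerivAt_inv (hy i)).const_mul c
  simp only [← div_eq_mul_inv, mul_neg] at h
  exact h.comp_hasFDerivAt y (hasFDerivAt_apply i y)

/-- the tangent cone of the smoothed complementarity set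
`Θ(ε) = {(y,z) : ψ_ε(yᵢ,zᵢ) = 0 ∀ i}` at any of its points is the kernel of the Jacobian
of the smoothed Fischer–Burmeister map. -/
theorem tangentCone_smoothed_FB_set {p : ℕ} (ε : ℝ) (hε : 0 < ε)
    (y z : Fin p → ℝ)
    (hyz : ∀ i, y i + z i - Real.sqrt (y i ^ 2 + z i ^ 2 + 2 * ε ^ 2) = 0) :
    tangentConeAt'
        {w : (Fin p → ℝ) × (Fin p → ℝ) |
          ∀ i, w.1 i + w.2 i - Real.sqrt (w.1 i ^ 2 + w.2 i ^ 2 + 2 * ε ^ 2) = 0}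
        (y, z) =
      {d : (Fin p → ℝ) × (Fin p → ℝ) | ∀ i,
        (1 - y i / Real.sqrt (y i ^ 2 + z i ^ 2 + 2 * ε ^ 2)) * d.1 i +
          (1 - z i / Real.sqrt (y i ^ 2 + z i ^ 2 + 2 * ε ^ 2)) * d.2 i = 0} := by
  have hpoint : ∀ i, 0 < y i ∧ z i = ε ^ 2 / y i :=
    fun i => (add_sub_sqrt_eq_zero_iff hε.ne').1 (hyz i)
  obtain rfl : z = fun i => ε ^ 2 / y i := funext fun i => (hpoint i).2
  have hΘ : {w : (Fin p → ℝ) × (Fin p → ℝ) |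
      ∀ i, w.1 i + w.2 i - Real.sqrt (w.1 i ^ 2 + w.2 i ^ 2 + 2 * ε ^ 2) = 0} =
      {w | w.1 ∈ Set.univ.pi (fun _ => Set.Ioi 0) ∧ w.2 = fun i => ε ^ 2 / w.1 i} := by
    ext w
    simp only [Set.mem_ofPred_eq, add_sub_sqrt_eq_zero_iff hε.ne', forall_and, funext_iff,
      Set.mem_univ_pi, Set.mem_Ioi]
  have horthant : Set.univ.pi (fun _ => Set.Ioi 0) ∈ 𝓝 y :=
    set_pi_mem_nhds Set.finite_univ fun i _ => Ioi_mem_nhds (hpoint i).1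
  rw [hΘ, tangentConeAt'_graph horthant
    (hasFDerivAt_const_div_pi (ε ^ 2) fun i => (hpoint i).1.ne')]
  ext d
  simp only [Set.mem_ofPred_eq, funext_iff, ContinuousLinearMap.pi_apply,
    smul_apply, ContinuousLinearMap.proj_apply, smul_eq_mul]
  exact forall_congr' fun i => (smoothedFB_jacobian_eq_zero_iff (hpoint i).1).symm
end

section
/- Let ψ_ε(a,b) = a + b − √(a² + b² + 2ε²), Θ(ε) = {(y,z) ∈ ℝᵖ × ℝᵖ : ψ_ε(yᵢ,zᵢ) = 0 for all i}, and Θ = Θ(0) = {(y,z) ∈ ℝᵖ × ℝᵖ : yᵢ ≥ 0, zᵢ ≥ 0, yᵢzᵢ = 0 for all i}. Then Θ(ε) converges to Θ as ε ↓ 0 in the Painlevé–Kuratowski sense; precisely: (i) for every sequence εₖ > 0 with εₖ → 0 and every sequence (yₖ, zₖ) ∈ Θ(εₖ) with (yₖ, zₖ) → (y, z), one has (y, z) ∈ Θ; and (ii) for every (y, z) ∈ Θ and every sequence εₖ > 0 with εₖ → 0, there exist (yₖ, zₖ) ∈ Θ(εₖ) with (yₖ, zₖ) → (y, z). -/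
/-!
`ψ_ε(a, b) = 0` holds exactly when `a + b ≥ 0` and `a b = ε²`; for `ε = 0` this is complementarity.
Since `ψ` is jointly continuous in `(ε, a, b)`, limits of zeros of `ψ_{εₖ}` are zeros of `ψ₀`.
Conversely, the hyperbola `a b = ε²` is reached from `(y, z)` by keeping `a - b = y - z`:
`a = s_ε(y - z)`, `b = s_ε(z - y)` with `s_ε(d) = (d + √(d² + 4ε²)) / 2`, the
Chen–Harker–Kanzow–Smale smoothing of `max d 0`, which tends to `(y, z)` when `(y, z) ∈ Θ`.
-/

open Filter Topology

noncomputable section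

def fbSmooth (ε a b : ℝ) : ℝ := a + b - Real.sqrt (a ^ 2 + b ^ 2 + 2 * ε ^ 2)

theorem continuous_fbSmooth : Continuous fun q : ℝ × ℝ × ℝ => fbSmooth q.1 q.2.1 q.2.2 := by
  unfold fbSmooth
  fun_prop

theorem fbSmooth_eq_zero_iff {ε a b : ℝ} : fbSmooth ε a b = 0 ↔ 0 ≤ a + b ∧ a * b = ε ^ 2 := by
  have hX : 0 ≤ a ^ 2 + b ^ 2 + 2 * ε ^ 2 := by positivity
  rw [fbSmooth, sub_eq_zero, eq_comm]
  constructor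
  · intro h
    have hs : 0 ≤ a + b := h ▸ Real.sqrt_nonneg _
    have hsq := (Real.sqrt_eq_iff_eq_sq hX hs).1 h
    exact ⟨hs, by linarith⟩
  · rintro ⟨hs, hab⟩
    exact (Real.sqrt_eq_iff_eq_sq hX hs).2 (by linarith)

theorem fbSmooth_zero_eq_zero_iff {a b : ℝ} :
    fbSmooth 0 a b = 0 ↔ 0 ≤ a ∧ 0 ≤ b ∧ a * b = 0 := by
  rw [fbSmooth_eq_zero_iff, zero_pow two_ne_zero]
  constructor
  · rintro ⟨hs, hab⟩
    rcases mul_eq_zero.1 hab with rfl | rfl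
    · exact ⟨le_rfl, by simpa using hs, hab⟩
    · exact ⟨by simpa using hs, le_rfl, hab⟩
  · rintro ⟨ha, hb, hab⟩
    exact ⟨add_nonneg ha hb, hab⟩

theorem fbSmooth_eq_zero_of_tendsto {α : Type*} {l : Filter α} [l.NeBot] {ε a b : α → ℝ}
    {ε₀ a₀ b₀ : ℝ} (hε : Tendsto ε l (𝓝 ε₀)) (ha : Tendsto a l (𝓝 a₀))
    (hb : Tendsto b l (𝓝 b₀)) (h : ∀ k, fbSmooth (ε k) (a k) (b k) = 0) :
    fbSmooth ε₀ a₀ b₀ = 0 := by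
  have hlim : Tendsto (fun k => fbSmooth (ε k) (a k) (b k)) l (𝓝 (fbSmooth ε₀ a₀ b₀)) :=
    (continuous_fbSmooth.tendsto _).comp (hε.prodMk_nhds (ha.prodMk_nhds hb))
  simp only [h] at hlim
  exact tendsto_nhds_unique hlim tendsto_const_nhds

def smoothPlus (ε d : ℝ) : ℝ := (d + Real.sqrt (d ^ 2 + 4 * ε ^ 2)) / 2

theorem smoothPlus_add_smoothPlus_neg (ε d : ℝ) :
    smoothPlus ε d + smoothPlus ε (-d) = Real.sqrt (d ^ 2 + 4 * ε ^ 2) := by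
  unfold smoothPlus
  rw [neg_sq]
  ring

theorem smoothPlus_mul_smoothPlus_neg (ε d : ℝ) :
    smoothPlus ε d * smoothPlus ε (-d) = ε ^ 2 := by
  have hsq : Real.sqrt (d ^ 2 + 4 * ε ^ 2) ^ 2 = d ^ 2 + 4 * ε ^ 2 :=
    Real.sq_sqrt (by positivity)
  unfold smoothPlus
  rw [neg_sq]
  linear_combination hsq / 4

theorem fbSmooth_smoothPlus (ε d : ℝ) : fbSmooth ε (smoothPlus ε d) (smoothPlus ε (-d)) = 0 :=
  fbSmooth_eq_zero_iff.2
    ⟨smoothPlus_add_smoothPlus_neg ε d ▸ Real.sqrt_nonneg _, smoothPlus_mul_smoothPlus_neg ε d⟩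

theorem smoothPlus_zero (d : ℝ) : smoothPlus 0 d = max d 0 := by
  rw [smoothPlus, zero_pow two_ne_zero, mul_zero, add_zero, Real.sqrt_sq_eq_abs]
  rcases le_total 0 d with hd | hd
  · rw [abs_of_nonneg hd, max_eq_left hd]
    ring
  · rw [abs_of_nonpos hd, max_eq_right hd]
    ring

theorem tendsto_smoothPlus {α : Type*} {l : Filter α} {ε : α → ℝ} (hε : Tendsto ε l (𝓝 0))
    (d : ℝ) : Tendsto (fun k => smoothPlus (ε k) d) l (𝓝 (max d 0)) := by
  rw [← smoothPlus_zero]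
  have hcont : Continuous fun e => smoothPlus e d := by
    unfold smoothPlus
    fun_prop
  exact (hcont.tendsto 0).comp hε

theorem max_sub_zero_eq_self_of_complementary {y z : ℝ} (hy : 0 ≤ y) (hz : 0 ≤ z)
    (hyz : y * z = 0) : max (y - z) 0 = y := by
  rcases mul_eq_zero.1 hyz with rfl | rfl
  · simpa using hz
  · simpa using hy

end

/-- Painlevé–Kuratowski convergence of the smoothed complementarity sets
`Θ(ε) = {(y,z) : ψ_ε(yᵢ,zᵢ) = 0 ∀ i}` to the complementarity set
`Θ = {(y,z) : yᵢ ≥ 0, zᵢ ≥ 0, yᵢzᵢ = 0 ∀ i}` as `ε ↓ 0`. -/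
theorem smoothed_FB_set_converges {p : ℕ}
    (Θε : ℝ → Set ((Fin p → ℝ) × (Fin p → ℝ)))
    (hΘε : ∀ ε, Θε ε = {w : (Fin p → ℝ) × (Fin p → ℝ) |
        ∀ i, w.1 i + w.2 i - Real.sqrt (w.1 i ^ 2 + w.2 i ^ 2 + 2 * ε ^ 2) = 0})
    (Θ : Set ((Fin p → ℝ) × (Fin p → ℝ)))
    (hΘ : Θ = {w : (Fin p → ℝ) × (Fin p → ℝ) |
        ∀ i, 0 ≤ w.1 i ∧ 0 ≤ w.2 i ∧ w.1 i * w.2 i = 0}) :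
    -- (i) outer limit: limits of points of `Θ(εₖ)` lie in `Θ`
    (∀ (εk : ℕ → ℝ), (∀ k, 0 < εk k) → Tendsto εk atTop (𝓝 0) →
      ∀ (yk zk : ℕ → (Fin p → ℝ)) (y z : Fin p → ℝ),
        (∀ k, (yk k, zk k) ∈ Θε (εk k)) →
        Tendsto (fun k => (yk k, zk k)) atTop (𝓝 (y, z)) →
        (y, z) ∈ Θ) ∧
    -- (ii) inner limit: every point of `Θ` is a limit of points of `Θ(εₖ)`
    (∀ (y z : Fin p → ℝ), (y, z) ∈ Θ →
      ∀ (εk : ℕ → ℝ), (∀ k, 0 < εk k) → Tendsto εk atTop (𝓝 0) →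
        ∃ (yk zk : ℕ → (Fin p → ℝ)),
          (∀ k, (yk k, zk k) ∈ Θε (εk k)) ∧
          Tendsto (fun k => (yk k, zk k)) atTop (𝓝 (y, z))) := by
  have hΘε' : ∀ ε, Θε ε = {w | ∀ i, fbSmooth ε (w.1 i) (w.2 i) = 0} := hΘε
  subst hΘ
  refine ⟨fun εk _ hεk yk zk y z hmem hlim i => ?_, fun y z hyz εk _ hεk => ?_⟩
  · simp only [hΘε', Set.mem_ofPred_eq] at hmem
    exact fbSmooth_zero_eq_zero_iff.1 <| fbSmooth_eq_zero_of_tendsto hεk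
      (tendsto_pi_nhds.1 hlim.fst_nhds i) (tendsto_pi_nhds.1 hlim.snd_nhds i) (hmem · i)
  · refine ⟨fun k i => smoothPlus (εk k) (y i - z i), fun k i => smoothPlus (εk k) (z i - y i),
      fun k => ?_, ?_⟩
    · simpa only [hΘε', Set.mem_ofPred_eq, ← neg_sub (y _)] using fun i => fbSmooth_smoothPlus _ _
    · refine (tendsto_pi_nhds.2 fun i => ?_).prodMk_nhds (tendsto_pi_nhds.2 fun i => ?_)
      · obtain ⟨hy, hz, hyz⟩ := hyz i
        simpa only [max_sub_zero_eq_self_of_complementary hy hz hyz]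
          using tendsto_smoothPlus hεk (y i - z i)
      · obtain ⟨hy, hz, hyz⟩ := hyz i
        simpa only [max_sub_zero_eq_self_of_complementary hz hy (by rw [mul_comm, hyz])]
          using tendsto_smoothPlus hεk (z i - y i)
end

section
/- Let A ∈ ℝ^{q×n}, b ∈ ℝ^q, c : ℝⁿ → ℝᵖ continuously differentiable. Define G(x, y, z^I) = (Aᵀy^E + Jc(x)ᵀy^I, Ax − b + y^E, c(x) + y^I − z^I), ψ_ε(a,b) = a + b − √(a² + b² + 2ε²), Θ(ε) = {(y^I, z^I) ∈ ℝᵖ × ℝᵖ : ψ_ε(y^I_i, z^I_i) = 0 for all i}, and Φ(ε) = {(x, y, z^I) : G(x,y,z^I) = 0, (y^I, z^I) ∈ Θ(ε)}. Then Φ(ε) is outer semicontinuous at ε = 0: for every sequence εₖ > 0 with εₖ → 0 and every sequence (xₖ, yₖ, z^I_ₖ) ∈ Φ(εₖ) converging to (x*, y*, z^I*), one has G(x*, y*, z^I*) = 0 and ((y^I)*, (z^I)*) ∈ Θ, i.e., (x*, y*, z^I*) ∈ Φ(0). -/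
open Filter Topology Matrix

/-!
The graph `{(ε, w) | w ∈ Φ(ε)}` is closed: `G` is continuous because `c` is `C¹` (so its
Jacobian is continuous), and the smoothed Fischer–Burmeister function
`ψ_ε(a, b) = a + b - √(a² + b² + 2ε²)` is jointly continuous in `(ε, a, b)`. Hence the limit
`(0, w)` of `(εₖ, wₖ)` lies in the graph, and `ψ₀(a, b) = 0` is exactly the complementarity
condition `a ≥ 0, b ≥ 0, a b = 0`.
-/

theorem Matrix.continuous_of_fderiv_eq_mulVec {m n : Type*} [Fintype m] [Fintype n]
    [DecidableEq n] {c : (n → ℝ) → m → ℝ} (hc : ContDiff ℝ 1 c)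
    {J : (n → ℝ) → Matrix m n ℝ} (hJ : ∀ x v, fderiv ℝ c x v = J x *ᵥ v) : Continuous J := by
  refine continuous_matrix fun i j => ?_
  have hentry : (fun x => J x i j) = fun x => fderiv ℝ c x (Pi.single j 1) i := by
    ext x
    rw [hJ, mulVec_single_one, col_apply]
  rw [hentry]
  exact (continuous_apply i).comp
    ((hc.continuous_fderiv one_ne_zero).clm_apply continuous_const)

noncomputable def smoothedFischerBurmeister (ε a b : ℝ) : ℝ :=
  a + b - √(a ^ 2 + b ^ 2 + 2 * ε ^ 2)

theorem continuous_smoothedFischerBurmeister {X : Type*} [TopologicalSpace X]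
    {ε a b : X → ℝ} (hε : Continuous ε) (ha : Continuous a) (hb : Continuous b) :
    Continuous fun x => smoothedFischerBurmeister (ε x) (a x) (b x) := by
  unfold smoothedFischerBurmeister
  fun_prop

theorem smoothedFischerBurmeister_zero_eq_zero_iff {a b : ℝ} :
    smoothedFischerBurmeister 0 a b = 0 ↔ 0 ≤ a ∧ 0 ≤ b ∧ a * b = 0 := by
  have hsqrt : smoothedFischerBurmeister 0 a b = 0 ↔ √(a ^ 2 + b ^ 2) = a + b := by
    simp only [smoothedFischerBurmeister, zero_pow two_ne_zero, mul_zero, add_zero]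
    constructor <;> intro h <;> linarith
  rw [hsqrt]
  constructor
  · intro h
    have hnonneg : 0 ≤ a + b := h ▸ Real.sqrt_nonneg _
    have hsq : a ^ 2 + b ^ 2 = (a + b) ^ 2 :=
      (Real.sqrt_eq_iff_eq_sq (by positivity) hnonneg).mp h
    have hab : a * b = 0 := by linear_combination -hsq / 2
    rcases mul_eq_zero.mp hab with ha | hb
    · exact ⟨ha.ge, by linarith, hab⟩
    · exact ⟨by linarith, hb.ge, hab⟩
  · rintro ⟨ha, hb, hab⟩
    exact (Real.sqrt_eq_iff_eq_sq (by positivity) (by positivity)).mpr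
      (by linear_combination -2 * hab)

theorem smoothed_feasible_set_outer_semicontinuous_general
    {n q p : ℕ} (A : Matrix (Fin q) (Fin n) ℝ) (b : Fin q → ℝ)
    (c : (Fin n → ℝ) → (Fin p → ℝ)) (hc : ContDiff ℝ 1 c)
    -- `Jc x` is the Jacobian of `c` at `x`
    (Jc : (Fin n → ℝ) → Matrix (Fin p) (Fin n) ℝ)
    (hJc : ∀ x v, fderiv ℝ c x v = Jc x *ᵥ v)
    (G : (Fin n → ℝ) × ((Fin q → ℝ) × (Fin p → ℝ)) × (Fin p → ℝ) →
        (Fin n → ℝ) × (Fin q → ℝ) × (Fin p → ℝ))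
    (hG : ∀ w, G w = (Aᵀ *ᵥ w.2.1.1 + (Jc w.1)ᵀ *ᵥ w.2.1.2,
        A *ᵥ w.1 - b + w.2.1.1,
        c w.1 + w.2.1.2 - w.2.2))
    (Φε : ℝ → Set ((Fin n → ℝ) × ((Fin q → ℝ) × (Fin p → ℝ)) × (Fin p → ℝ)))
    (hΦε : ∀ ε, Φε ε = {w | G w = 0 ∧
        ∀ i, w.2.1.2 i + w.2.2 i -
          Real.sqrt (w.2.1.2 i ^ 2 + w.2.2 i ^ 2 + 2 * ε ^ 2) = 0})
    (εk : ℕ → ℝ) (hεk0 : Tendsto εk atTop (𝓝 0))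
    (wk : ℕ → (Fin n → ℝ) × ((Fin q → ℝ) × (Fin p → ℝ)) × (Fin p → ℝ))
    (hwk : ∀ k, wk k ∈ Φε (εk k))
    (w : (Fin n → ℝ) × ((Fin q → ℝ) × (Fin p → ℝ)) × (Fin p → ℝ))
    (hlim : Tendsto wk atTop (𝓝 w)) :
    G w = 0 ∧ ∀ i, 0 ≤ w.2.1.2 i ∧ 0 ≤ w.2.2 i ∧ w.2.1.2 i * w.2.2 i = 0 := by
  have hJ : Continuous Jc := continuous_of_fderiv_eq_mulVec hc hJc
  have hGcont : Continuous G := by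
    rw [funext hG]
    have hc0 : Continuous c := hc.continuous
    fun_prop
  have hgraph : IsClosed {εw : ℝ × _ | G εw.2 = 0 ∧
      ∀ i, smoothedFischerBurmeister εw.1 (εw.2.2.1.2 i) (εw.2.2.2 i) = 0} := by
    rw [Set.ofPred_and, Set.ofPred_forall]
    exact (isClosed_eq (hGcont.comp continuous_snd) continuous_const).inter <|
      isClosed_iInter fun i => isClosed_eq (continuous_smoothedFischerBurmeister
        continuous_fst (by fun_prop) (by fun_prop)) continuous_const
  have hmem := hgraph.mem_of_tendsto (hεk0.prodMk_nhds hlim)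
    (Eventually.of_forall fun k => by
      have hk := hwk k
      rwa [hΦε] at hk)
  exact ⟨hmem.1, fun i => smoothedFischerBurmeister_zero_eq_zero_iff.mp (hmem.2 i)⟩

/-- outer semicontinuity at `ε = 0` of the feasible sets
`Φ(ε) = {(x,y,z^I) : G(x,y,z^I) = 0, (y^I,z^I) ∈ Θ(ε)}` of the smoothed problems.
A point of the ambient space is written `(x, (yE, yI), zI)`. -/
theorem smoothed_feasible_set_outer_semicontinuous
    {n q p : ℕ} (A : Matrix (Fin q) (Fin n) ℝ) (b : Fin q → ℝ)
    (c : (Fin n → ℝ) → (Fin p → ℝ)) (hc : ContDiff ℝ 1 c)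
    -- `Jc x` is the Jacobian of `c` at `x`
    (Jc : (Fin n → ℝ) → Matrix (Fin p) (Fin n) ℝ)
    (hJc : ∀ x v, fderiv ℝ c x v = Jc x *ᵥ v)
    (G : (Fin n → ℝ) × ((Fin q → ℝ) × (Fin p → ℝ)) × (Fin p → ℝ) →
        (Fin n → ℝ) × (Fin q → ℝ) × (Fin p → ℝ))
    (hG : ∀ w, G w = (Aᵀ *ᵥ w.2.1.1 + (Jc w.1)ᵀ *ᵥ w.2.1.2,
        A *ᵥ w.1 - b + w.2.1.1,
        c w.1 + w.2.1.2 - w.2.2))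
    (Φε : ℝ → Set ((Fin n → ℝ) × ((Fin q → ℝ) × (Fin p → ℝ)) × (Fin p → ℝ)))
    (hΦε : ∀ ε, Φε ε = {w | G w = 0 ∧
        ∀ i, w.2.1.2 i + w.2.2 i -
          Real.sqrt (w.2.1.2 i ^ 2 + w.2.2 i ^ 2 + 2 * ε ^ 2) = 0})
    (εk : ℕ → ℝ) (hεk : ∀ k, 0 < εk k) (hεk0 : Tendsto εk atTop (𝓝 0))
    (wk : ℕ → (Fin n → ℝ) × ((Fin q → ℝ) × (Fin p → ℝ)) × (Fin p → ℝ))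
    (hwk : ∀ k, wk k ∈ Φε (εk k))
    (w : (Fin n → ℝ) × ((Fin q → ℝ) × (Fin p → ℝ)) × (Fin p → ℝ))
    (hlim : Tendsto wk atTop (𝓝 w)) :
    G w = 0 ∧ ∀ i, 0 ≤ w.2.1.2 i ∧ 0 ≤ w.2.2 i ∧ w.2.1.2 i * w.2.2 i = 0 :=
  smoothed_feasible_set_outer_semicontinuous_general A b c hc Jc hJc G hG Φε hΦε εk hεk0 wk hwk w
    hlim
end

section
/- Let M ∈ ℝ^{n×n}, A ∈ ℝ^{q×n}, C ∈ ℝ^{p×n}, and D_y, D_z ∈ ℝ^{p×p} with D_y + D_z = I_p. If the matrix M − AᵀA − CᵀD_zC is invertible, then the (n+q+2p) × (n+q+2p) block matrix [[M, Aᵀ, Cᵀ, 0], [A, I_q, 0, 0], [C, 0, I_p, −I_p], [0, 0, D_y, D_z]] has full row rank (equivalently, it is invertible). -/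
/-!
Block Gaussian elimination: the second and third block rows give `ξ₂` and `ξ₄` in terms of
`ξ₁, ξ₃`; since `D_y + D_z = I`, the fourth row then reads `ξ₃ - D_z (ξ₃ - ξ₄) = b₄`, which
fixes `ξ₃` in terms of `ξ₁`; substituting into the first row leaves a system whose matrix is
the Schur complement `M - AᵀA - CᵀD_zC`. So every right-hand side has exactly one preimage.
-/

open Matrix

namespace Matrix

variable {R : Type*} [CommRing R] {m k l : Type*} [Fintype m] [Fintype k] [Fintype l]

theorem mulVec_eq_iff_eq_nonsing_inv_mulVec [DecidableEq m] {N : Matrix m m R} (hN : IsUnit N)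
    {x c : m → R} : N *ᵥ x = c ↔ x = N⁻¹ *ᵥ c := by
  have hdet := (isUnit_iff_isUnit_det N).mp hN
  constructor
  · rintro rfl
    rw [mulVec_mulVec, nonsing_inv_mul N hdet, one_mulVec]
  · rintro rfl
    rw [mulVec_mulVec, mul_nonsing_inv N hdet, one_mulVec]

theorem block_system_iff_schur_complement [DecidableEq l] (M : Matrix m m R) (A : Matrix k m R)
    (C : Matrix l m R) {Dy Dz : Matrix l l R} (hD : Dy + Dz = 1)
    {x b₁ : m → R} {y b₂ : k → R} {z w b₃ b₄ : l → R} :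
    (M *ᵥ x + Aᵀ *ᵥ y + Cᵀ *ᵥ z = b₁ ∧ A *ᵥ x + y = b₂ ∧ C *ᵥ x + z - w = b₃ ∧
        Dy *ᵥ z + Dz *ᵥ w = b₄) ↔
      ((M - Aᵀ * A - Cᵀ * Dz * C) *ᵥ x = b₁ - Aᵀ *ᵥ b₂ - Cᵀ *ᵥ (b₄ + Dz *ᵥ b₃) ∧
        y = b₂ - A *ᵥ x ∧ z = b₄ + Dz *ᵥ (b₃ - C *ᵥ x) ∧ w = C *ᵥ x + z - b₃) := by
  have hDy : Dy = 1 - Dz := eq_sub_of_add_eq hD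
  constructor
  · rintro ⟨rfl, rfl, rfl, rfl⟩
    refine ⟨?_, by abel, ?_, by abel⟩ <;>
      simp only [hDy, sub_mulVec, ← mulVec_mulVec, mulVec_add, mulVec_sub, one_mulVec] <;> abel
  · rintro ⟨h₁, rfl, rfl, rfl⟩
    refine ⟨?_, by abel, by abel, ?_⟩
    · obtain rfl := sub_eq_iff_eq_add.mp (sub_eq_iff_eq_add.mp h₁.symm)
      simp only [sub_mulVec, ← mulVec_mulVec, mulVec_add, mulVec_sub]
      abel
    · simp only [hDy, sub_mulVec, mulVec_add, mulVec_sub, one_mulVec]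
      abel

theorem block_system_existsUnique [DecidableEq m] [DecidableEq l] (M : Matrix m m R)
    (A : Matrix k m R) (C : Matrix l m R) {Dy Dz : Matrix l l R} (hD : Dy + Dz = 1)
    (hS : IsUnit (M - Aᵀ * A - Cᵀ * Dz * C)) (b₁ : m → R) (b₂ : k → R) (b₃ b₄ : l → R) :
    ∃! ξ : (m → R) × (k → R) × (l → R) × (l → R),
      M *ᵥ ξ.1 + Aᵀ *ᵥ ξ.2.1 + Cᵀ *ᵥ ξ.2.2.1 = b₁ ∧ A *ᵥ ξ.1 + ξ.2.1 = b₂ ∧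
        C *ᵥ ξ.1 + ξ.2.2.1 - ξ.2.2.2 = b₃ ∧ Dy *ᵥ ξ.2.2.1 + Dz *ᵥ ξ.2.2.2 = b₄ := by
  set x₀ := (M - Aᵀ * A - Cᵀ * Dz * C)⁻¹ *ᵥ (b₁ - Aᵀ *ᵥ b₂ - Cᵀ *ᵥ (b₄ + Dz *ᵥ b₃))
  set z₀ := b₄ + Dz *ᵥ (b₃ - C *ᵥ x₀)
  have hsolve : ∀ ξ : (m → R) × (k → R) × (l → R) × (l → R),
      (M *ᵥ ξ.1 + Aᵀ *ᵥ ξ.2.1 + Cᵀ *ᵥ ξ.2.2.1 = b₁ ∧ A *ᵥ ξ.1 + ξ.2.1 = b₂ ∧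
        C *ᵥ ξ.1 + ξ.2.2.1 - ξ.2.2.2 = b₃ ∧ Dy *ᵥ ξ.2.2.1 + Dz *ᵥ ξ.2.2.2 = b₄) ↔
      ξ = (x₀, b₂ - A *ᵥ x₀, z₀, C *ᵥ x₀ + z₀ - b₃) := by
    rintro ⟨x, y, z, w⟩
    rw [block_system_iff_schur_complement M A C hD, mulVec_eq_iff_eq_nonsing_inv_mulVec hS]
    simp only [Prod.mk.injEq]
    constructor <;> rintro ⟨rfl, rfl, rfl, rfl⟩ <;> exact ⟨rfl, rfl, rfl, rfl⟩
  exact ⟨_, (hsolve _).2 rfl, fun ξ h => (hsolve ξ).1 h⟩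

end Matrix

/-- if `D_y + D_z = I` and `M − AᵀA − CᵀD_zC` is invertible, then the block
matrix `[[M, Aᵀ, Cᵀ, 0], [A, I, 0, 0], [C, 0, I, −I], [0, 0, D_y, D_z]]`, viewed as the
linear map `(ξ₁,ξ₂,ξ₃,ξ₄) ↦ (Mξ₁ + Aᵀξ₂ + Cᵀξ₃, Aξ₁ + ξ₂, Cξ₁ + ξ₃ − ξ₄, D_yξ₃ + D_zξ₄)`,
has full row rank, i.e. it is surjective — equivalently (being square) it is bijective. -/
theorem smoothed_jacobian_full_rank
    {n q p : ℕ} (M : Matrix (Fin n) (Fin n) ℝ) (A : Matrix (Fin q) (Fin n) ℝ)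
    (C : Matrix (Fin p) (Fin n) ℝ) (Dy Dz : Matrix (Fin p) (Fin p) ℝ)
    (hD : Dy + Dz = 1)
    (hinv : IsUnit (M - Aᵀ * A - Cᵀ * Dz * C))
    (L : (Fin n → ℝ) × (Fin q → ℝ) × (Fin p → ℝ) × (Fin p → ℝ) →
        (Fin n → ℝ) × (Fin q → ℝ) × (Fin p → ℝ) × (Fin p → ℝ))
    (hL : ∀ ξ, L ξ = (M *ᵥ ξ.1 + Aᵀ *ᵥ ξ.2.1 + Cᵀ *ᵥ ξ.2.2.1,
        A *ᵥ ξ.1 + ξ.2.1,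
        C *ᵥ ξ.1 + ξ.2.2.1 - ξ.2.2.2,
        Dy *ᵥ ξ.2.2.1 + Dz *ᵥ ξ.2.2.2)) :
    Function.Surjective L ∧ Function.Bijective L := by
  have hbij : Function.Bijective L := by
    rw [Function.bijective_iff_existsUnique]
    rintro ⟨b₁, b₂, b₃, b₄⟩
    simpa only [hL, Prod.mk.injEq] using block_system_existsUnique M A C hD hinv b₁ b₂ b₃ b₄
  exact ⟨hbij.surjective, hbij⟩
end
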